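/- If G is a d-regular graph with chromatic index d+1 (Vizing class 2), then the proper additive chromatic index of G is at most ((2^⌈log₂(d+1)⌉)² + 2)/3. In particular, if d+1 = 2ⁿ for some n > 0, then η'_p(G) ≤ ((d+1)² + 2)/3. -/

import Mathlib

/-!
Start from a proper edge coloring with colors `1, …, d + 1` and recolor `i` by `φ (i - 1) + 1`,
where `φ` reads binary digits in base `4` (the Moser–de Bruijn sequence). In a `d`-regular graph
every vertex `v` misses exactly one color `μ v`, so the colors at `v` sum to `T - c (μ v)`, where
`T` is the sum of all colors. Hence for edges `xv`, `xw` through `x` the neighbourhood sums agree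
iff `c (μ v) + 2 c (xv) = c (μ w) + 2 c (xw)`. Every number is `φ a + 2 φ b` for at most one pair
`(a, b)`, so `c (xv) = c (xw)`, against properness. The largest new color is
`φ (2 ^ n - 1) + 1 = (4 ^ n + 2) / 3` when `d + 1 ≤ 2 ^ n`.
-/

open scoped Classical
open Finset

namespace AddEdge

variable {V : Type*} [Fintype V] [DecidableEq V]

/-- `N'(e)`-sum: the sum of the colors of the edges of `G` sharing an endpoint
with `e`, excluding `e` itself. -/
noncomputable def nbrSum (G : SimpleGraph V) (c : Sym2 V → ℕ) (e : Sym2 V) : ℕ :=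
  ∑ f ∈ univ.filter (fun f => f ∈ G.edgeSet ∧ f ≠ e ∧ ∃ v, v ∈ e ∧ v ∈ f), c f

/-- `c` is a proper edge coloring of `G`: distinct incident edges get distinct colors. -/
def IsProperEdgeColoring (G : SimpleGraph V) (c : Sym2 V → ℕ) : Prop :=
  ∀ e ∈ G.edgeSet, ∀ f ∈ G.edgeSet, e ≠ f → (∃ v, v ∈ e ∧ v ∈ f) → c e ≠ c f

/-- `c` is an additive edge coloring of `G`: distinct incident edges have distinct
sums of colors over their incident-edge neighborhoods. -/
def IsAdditiveEdgeColoring (G : SimpleGraph V) (c : Sym2 V → ℕ) : Prop :=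
  ∀ e ∈ G.edgeSet, ∀ f ∈ G.edgeSet, e ≠ f → (∃ v, v ∈ e ∧ v ∈ f) →
    nbrSum G c e ≠ nbrSum G c f

/-- The chromatic index: the least `k` such that `G` has a proper edge coloring
with colors from `{1, …, k}`. -/
noncomputable def chromIndex (G : SimpleGraph V) : ℕ :=
  sInf {k | ∃ c : Sym2 V → ℕ, (∀ e ∈ G.edgeSet, c e ∈ Finset.Icc 1 k) ∧
    IsProperEdgeColoring G c}

/-- The proper additive chromatic index `η'_p(G)`: the least `k` such that `G` has an
edge coloring with colors from `{1, …, k}` that is both proper and additive. -/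
noncomputable def properAddIndex (G : SimpleGraph V) : ℕ :=
  sInf {k | ∃ c : Sym2 V → ℕ, (∀ e ∈ G.edgeSet, c e ∈ Finset.Icc 1 k) ∧
    IsProperEdgeColoring G c ∧ IsAdditiveEdgeColoring G c}

def moserDeBruijn (m : ℕ) : ℕ := Nat.ofDigits 4 (Nat.digits 2 m)

theorem moserDeBruijn_eq (m : ℕ) : moserDeBruijn m = m % 2 + 4 * moserDeBruijn (m / 2) := by
  rcases m.eq_zero_or_pos with rfl | hm
  · rfl
  · rw [moserDeBruijn, Nat.digits_def' one_lt_two hm, Nat.ofDigits_cons]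
    rfl

theorem moserDeBruijn_add_two_mul_inj {x y x' y' : ℕ}
    (h : moserDeBruijn x + 2 * moserDeBruijn y = moserDeBruijn x' + 2 * moserDeBruijn y') :
    x = x' ∧ y = y' := by
  obtain ⟨n, hn⟩ : ∃ n, x + y + x' + y' ≤ n := ⟨_, le_rfl⟩
  induction n generalizing x y x' y' with
  | zero => omega
  | succ n ih =>
    rw [moserDeBruijn_eq x, moserDeBruijn_eq y, moserDeBruijn_eq x', moserDeBruijn_eq y'] at h
    have hlow : x % 2 = x' % 2 ∧ y % 2 = y' % 2 := by omega
    have hhigh := ih (x := x / 2) (y := y / 2) (x' := x' / 2) (y' := y' / 2) (by omega) (by omega)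
    omega

theorem three_mul_moserDeBruijn_add_one_le {m n : ℕ} (hm : m < 2 ^ n) :
    3 * moserDeBruijn m + 1 ≤ 4 ^ n := by
  induction n generalizing m with
  | zero =>
    obtain rfl : m = 0 := by simpa using hm
    rfl
  | succ n ih =>
    have := ih (m := m / 2) (by rw [pow_succ] at hm; omega)
    rw [moserDeBruijn_eq, pow_succ]
    omega

variable {G : SimpleGraph V}

omit [Fintype V] [DecidableEq V] in
theorem exists_isProperEdgeColoring_of_chromIndex_eq_succ {k : ℕ} (h : chromIndex G = k + 1) :
    ∃ c : Sym2 V → ℕ, (∀ e ∈ G.edgeSet, c e ∈ Icc 1 (k + 1)) ∧ IsProperEdgeColoring G c :=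
  h ▸ Nat.sInf_mem (Nat.nonempty_of_sInf_eq_succ h)

theorem properAddIndex_le {c : Sym2 V → ℕ} {k : ℕ} (hck : ∀ e ∈ G.edgeSet, c e ∈ Icc 1 k)
    (hc : IsProperEdgeColoring G c) (hadd : IsAdditiveEdgeColoring G c) : properAddIndex G ≤ k :=
  Nat.sInf_le ⟨c, hck, hc, hadd⟩

omit [Fintype V] [DecidableEq V] in
theorem IsProperEdgeColoring.comp {c : Sym2 V → ℕ} {C : Set ℕ} {g : ℕ → ℕ}
    (hc : IsProperEdgeColoring G c) (hcC : ∀ e ∈ G.edgeSet, c e ∈ C) (hg : Set.InjOn g C) :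
    IsProperEdgeColoring G (g ∘ c) :=
  fun e he f hf hef hef' hgc => hc e he f hf hef hef' (hg (hcC e he) (hcC f hf) hgc)

theorem nbrSum_add_two_mul (c : Sym2 V → ℕ) {u v : V} (h : G.Adj u v) :
    nbrSum G c s(u, v) + 2 * c s(u, v) =
      ∑ f ∈ G.incidenceFinset u, c f + ∑ f ∈ G.incidenceFinset v, c f := by
  have hinter : G.incidenceFinset u ∩ G.incidenceFinset v = {s(u, v)} := by
    rw [← coe_inj, coe_inter, SimpleGraph.coe_incidenceFinset, SimpleGraph.coe_incidenceFinset,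
      coe_singleton, G.incidenceSet_inter_incidenceSet_of_adj h]
  have hnbr : univ.filter (fun f => f ∈ G.edgeSet ∧ f ≠ s(u, v) ∧ ∃ w, w ∈ s(u, v) ∧ w ∈ f) =
      (G.incidenceFinset u ∪ G.incidenceFinset v).erase s(u, v) := by
    ext f
    simp only [mem_filter, mem_univ, true_and, mem_erase, mem_union,
      SimpleGraph.mem_incidenceFinset, SimpleGraph.incidenceSet, Set.mem_ofPred_eq,
      Sym2.mem_iff, exists_eq_or_imp, exists_eq_left]
    tauto
  have huv : s(u, v) ∈ G.incidenceFinset u ∪ G.incidenceFinset v :=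
    mem_union_left _ ((G.mem_incidenceFinset u _).2 (G.mk'_mem_incidenceSet_left_iff.2 h))
  rw [nbrSum, hnbr, two_mul, ← add_assoc, sum_erase_add _ _ huv, ← sum_singleton c s(u, v),
    ← hinter, sum_union_inter]

theorem exists_sum_incidenceFinset_add_eq {d : ℕ} {C : Finset ℕ} {c : Sym2 V → ℕ}
    (hreg : G.IsRegularOfDegree d) (hC : #C = d + 1) (hcC : ∀ e ∈ G.edgeSet, c e ∈ C)
    (hc : IsProperEdgeColoring G c) (g : ℕ → ℕ) (u : V) :
    ∃ μ ∈ C, ∑ f ∈ G.incidenceFinset u, g (c f) + g μ = ∑ i ∈ C, g i := by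
  have hinc : ∀ e ∈ G.incidenceFinset u, e ∈ G.edgeSet ∧ u ∈ e := fun e he =>
    (G.mem_incidenceFinset u e).1 he
  have hinj : Set.InjOn c (G.incidenceFinset u) := fun e he f hf hcef => by
    by_contra hef
    exact hc e (hinc e he).1 f (hinc f hf).1 hef ⟨u, (hinc e he).2, (hinc f hf).2⟩ hcef
  obtain ⟨μ, hμ, hins⟩ : ∃ μ ∉ (G.incidenceFinset u).image c,
      insert μ ((G.incidenceFinset u).image c) = C := by
    refine exists_eq_insert_iff.2 ⟨fun i hi => ?_, ?_⟩
    · obtain ⟨e, he, rfl⟩ := mem_image.1 hi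
      exact hcC e (hinc e he).1
    · rw [card_image_of_injOn hinj, G.card_incidenceFinset_eq_degree, hreg u, hC]
  refine ⟨μ, hins ▸ mem_insert_self _ _, ?_⟩
  rw [← hins, sum_insert hμ, sum_image hinj, add_comm]

theorem isAdditiveEdgeColoring_comp {d : ℕ} {C : Finset ℕ} {c : Sym2 V → ℕ} {g : ℕ → ℕ}
    (hreg : G.IsRegularOfDegree d) (hC : #C = d + 1) (hcC : ∀ e ∈ G.edgeSet, c e ∈ C)
    (hc : IsProperEdgeColoring G c)
    (hg : ∀ a ∈ C, ∀ b ∈ C, ∀ a' ∈ C, ∀ b' ∈ C, g a + 2 * g b = g a' + 2 * g b' → b = b') :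
    IsAdditiveEdgeColoring G (g ∘ c) := by
  rintro _ hv _ hw hvw ⟨x, hxv, hxw⟩ hsum
  obtain ⟨v, rfl⟩ := Sym2.mem_iff_exists.1 hxv
  obtain ⟨w, rfl⟩ := Sym2.mem_iff_exists.1 hxw
  obtain ⟨μv, hμv, hmissv⟩ := exists_sum_incidenceFinset_add_eq hreg hC hcC hc g v
  obtain ⟨μw, hμw, hmissw⟩ := exists_sum_incidenceFinset_add_eq hreg hC hcC hc g w
  have hsumv := nbrSum_add_two_mul (g ∘ c) hv
  have hsumw := nbrSum_add_two_mul (g ∘ c) hw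
  simp only [Function.comp_apply] at hsumv hsumw
  exact hc _ hv _ hw hvw ⟨x, Sym2.mem_mk_left x v, Sym2.mem_mk_left x w⟩
    (hg μv hμv _ (hcC _ hv) μw hμw _ (hcC _ hw) (by omega))

theorem properAddIndex_le_of_isProperEdgeColoring {d n : ℕ} {c : Sym2 V → ℕ}
    (hreg : G.IsRegularOfDegree d) (hcC : ∀ e ∈ G.edgeSet, c e ∈ Icc 1 (d + 1))
    (hc : IsProperEdgeColoring G c) (hdn : d + 1 ≤ 2 ^ n) :
    properAddIndex G ≤ (4 ^ n + 2) / 3 := by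
  set g : ℕ → ℕ := fun i => moserDeBruijn (i - 1) + 1
  have hg : ∀ a ∈ Icc 1 (d + 1), ∀ b ∈ Icc 1 (d + 1), ∀ a' ∈ Icc 1 (d + 1),
      ∀ b' ∈ Icc 1 (d + 1), g a + 2 * g b = g a' + 2 * g b' → b = b' := by
    intro a _ b hb a' _ b' hb' h
    simp only [g] at h
    have := (moserDeBruijn_add_two_mul_inj (x := a - 1) (y := b - 1) (x' := a' - 1)
      (y' := b' - 1) (by omega)).2
    rw [mem_Icc] at hb hb'
    omega
  have hg_inj : Set.InjOn g ↑(Icc 1 (d + 1)) := fun a ha b hb hab =>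
    hg a ha a ha a ha b hb (by rw [hab])
  refine properAddIndex_le (fun e he => ?_) (hc.comp (fun e he => hcC e he) hg_inj)
    (isAdditiveEdgeColoring_comp hreg (by simp) hcC hc hg)
  have hce := mem_Icc.1 (hcC e he)
  have := three_mul_moserDeBruijn_add_one_le (m := c e - 1) (n := n) (by omega)
  rw [mem_Icc, Nat.le_div_iff_mul_le three_pos]
  simp only [Function.comp_apply, g]
  omega

/-- If `G` is `d`-regular with chromatic index `d+1`, then
`η'_p(G) ≤ ((2 ^ ⌈log₂ (d+1)⌉) ^ 2 + 2) / 3`; in particular if `d + 1 = 2 ^ n`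
with `n > 0` then `η'_p(G) ≤ ((d+1) ^ 2 + 2) / 3`.  (The divisions are exact.) -/
theorem properAddIndex_le_of_class2 (G : SimpleGraph V) (d : ℕ)
    (hreg : G.IsRegularOfDegree d) (hchrom : chromIndex G = d + 1) :
    properAddIndex G ≤ ((2 ^ Nat.clog 2 (d + 1)) ^ 2 + 2) / 3 ∧
      (∀ n : ℕ, 0 < n → d + 1 = 2 ^ n →
        properAddIndex G ≤ ((d + 1) ^ 2 + 2) / 3) := by
  obtain ⟨c, hcC, hc⟩ := exists_isProperEdgeColoring_of_chromIndex_eq_succ hchrom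
  have hbound : ∀ n, d + 1 ≤ 2 ^ n → properAddIndex G ≤ ((2 ^ n) ^ 2 + 2) / 3 := fun n hdn => by
    rw [← pow_mul, mul_comm, pow_mul]
    exact properAddIndex_le_of_isProperEdgeColoring hreg hcC hc hdn
  refine ⟨hbound _ (Nat.le_pow_clog one_lt_two _), fun n _ hdn => ?_⟩
  rw [hdn]
  exact hbound n hdn.le

end AddEdge
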